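/- Let n ≥ 2 and let Φ_D = {±e_j ± e_k : 1 ≤ j < k ≤ n} (all four sign combinations) be the set of roots of type D_n in ℝ^n, whose root lattice is the even sublattice N = {a ∈ ℤ^n : a_1 + ⋯ + a_n is even} and whose dual lattice is M = ℤ^n + ℤ·(1/2, …, 1/2). Let F = {u ∈ ℝ^n : −1 ≤ ⟨u, v⟩ ≤ 1 for all v ∈ Φ_D}. Then for every odd integer q ≥ 3 and every w ∈ (1/q)M, there exists u ∈ (1/q)M with u − w ∈ M and u lying in the topological interior of F. (Consequently, every lattice polytope cut out by D_n is diagonally split for every odd q.) -/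

import Mathlib

open Finset

/-- The `i`-th standard basis vector of `ℝ^n`. -/
noncomputable def stdBasis (n : ℕ) (i : Fin n) : Fin n → ℝ := fun j => if j = i then 1 else 0

/-- The standard inner product on `ℝ^n`. -/
noncomputable def innerProd {n : ℕ} (u v : Fin n → ℝ) : ℝ := ∑ i, u i * v i

/-- The roots of type `D_n`: `±e_j ± e_k` for `j < k` (all four sign choices). -/
def typeD (n : ℕ) : Set (Fin n → ℝ) :=
  {v | ∃ j k, j < k ∧ ∃ ε δ : ℝ, (ε = 1 ∨ ε = -1) ∧ (δ = 1 ∨ δ = -1) ∧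
    v = ε • stdBasis n j + δ • stdBasis n k}

/-- The lattice `M = ℤ^n + ℤ·(1/2, …, 1/2) ⊆ ℝ^n`, the union of `ℤ^n` and its translate by
`(1/2, …, 1/2)`. -/
def halfLattice (n : ℕ) : Set (Fin n → ℝ) :=
  {u | (∀ i, ∃ m : ℤ, u i = m) ∨ (∀ i, ∃ m : ℤ, u i = m + 1/2)}

/-- The diagonal splitting polytope `F = {u | -1 ≤ ⟨u,v⟩ ≤ 1 for all v ∈ Φ}`. -/
def splitPolytope (n : ℕ) (Φ : Set (Fin n → ℝ)) : Set (Fin n → ℝ) :=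
  {u | ∀ v ∈ Φ, -1 ≤ innerProd u v ∧ innerProd u v ≤ 1}

/-!
Reduce every coordinate of `q • w` to its balanced residue modulo `q`. Since `q` is odd the
residues `t` satisfy `|t| ≤ (q - 1)/2`, so `u = t / q` has all coordinates of absolute value
below `1/2`, and then `|⟨u, ±e_j ± e_k⟩| ≤ |u_j| + |u_k| < 1`. When `q • w` lies in the
half-integer coset, one first shifts `w` by `(1/2, …, 1/2)`; this makes `q • w` integral
because `q/2 ≡ 1/2` modulo `ℤ` for odd `q`.
-/

theorem innerProd_smul_stdBasis_add_smul_stdBasis {n : ℕ} (u : Fin n → ℝ) (j k : Fin n)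
    (ε δ : ℝ) :
    innerProd u (ε • stdBasis n j + δ • stdBasis n k) = ε * u j + δ * u k := by
  unfold innerProd stdBasis
  simp only [Pi.add_apply, Pi.smul_apply, smul_eq_mul, mul_add, mul_ite, mul_one, mul_zero,
    sum_add_distrib, sum_ite_eq', mem_univ, if_true]
  ring

theorem abs_innerProd_typeD_lt_one {n : ℕ} {u : Fin n → ℝ} (hu : ∀ i, |u i| < 1 / 2)
    {v : Fin n → ℝ} (hv : v ∈ typeD n) : |innerProd u v| < 1 := by
  obtain ⟨j, k, -, ε, δ, hε, hδ, rfl⟩ := hv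
  have hε1 : |ε| = 1 := by rcases hε with rfl | rfl <;> norm_num
  have hδ1 : |δ| = 1 := by rcases hδ with rfl | rfl <;> norm_num
  rw [innerProd_smul_stdBasis_add_smul_stdBasis]
  calc |ε * u j + δ * u k| ≤ |ε * u j| + |δ * u k| := abs_add_le _ _
    _ = |u j| + |u k| := by rw [abs_mul, abs_mul, hε1, hδ1, one_mul, one_mul]
    _ < 1 := by linarith [hu j, hu k]

theorem mem_interior_splitPolytope_typeD {n : ℕ} {u : Fin n → ℝ} (hu : ∀ i, |u i| < 1 / 2) :
    u ∈ interior (splitPolytope n (typeD n)) := by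
  have hcube : ∀ {u' : Fin n → ℝ}, u' ∈ Metric.ball 0 (1 / 2) ↔ ∀ i, |u' i| < 1 / 2 := by
    intro u'
    rw [mem_ball_zero_iff, pi_norm_lt_iff (by norm_num)]
    simp only [Real.norm_eq_abs]
  have hsub : Metric.ball (0 : Fin n → ℝ) (1 / 2) ⊆ splitPolytope n (typeD n) :=
    fun u' hu' v hv => abs_le.mp (abs_innerProd_typeD_lt_one (hcube.mp hu') hv).le
  exact interior_maximal hsub Metric.isOpen_ball (hcube.mpr hu)

theorem exists_abs_lt_half_sub_eq_int {q : ℤ} (hq : 0 < q) (hodd : Odd q) {x : ℝ}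
    (hx : ∃ a : ℤ, q * x = a) :
    ∃ y : ℝ, (∃ t : ℤ, q * y = t) ∧ (∃ k : ℤ, y - x = k) ∧ |y| < 1 / 2 := by
  obtain ⟨a, hx⟩ := hx
  lift q to ℕ using hq.le
  obtain ⟨c, hc⟩ := hodd
  have hq' : (0 : ℝ) < q := by exact_mod_cast hq
  set t := a.bmod q
  have hlo := Int.le_bmod (x := a) (by exact_mod_cast hq)
  have hhi := Int.bmod_lt (x := a) (by exact_mod_cast hq)
  obtain ⟨k, hk⟩ := Int.dvd_bmod_sub_self (x := a) (m := q)
  have htc : |t| ≤ c := abs_le.mpr ⟨by omega, by omega⟩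
  push_cast at hx ⊢
  refine ⟨t / q, ⟨t, by field_simp⟩, ⟨k, ?_⟩, ?_⟩
  · have hk' : (t : ℝ) - a = q * k := by exact_mod_cast hk
    field_simp
    linarith
  · have htq : 2 * |(t : ℝ)| < q := by
      rw [← Int.cast_abs]
      exact_mod_cast (by omega : 2 * |t| < q)
    rw [abs_div, Nat.abs_cast, div_lt_iff₀ hq']
    linarith

theorem typeD_diagonally_split_general (n : ℕ) (q : ℤ) (hq : 3 ≤ q) (hodd : Odd q)
    (w : Fin n → ℝ) (hw : (q : ℝ) • w ∈ halfLattice n) :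
    ∃ u : Fin n → ℝ, (q : ℝ) • u ∈ halfLattice n ∧ u - w ∈ halfLattice n ∧
      u ∈ interior (splitPolytope n (typeD n)) := by
  have hq0 : 0 < q := by omega
  rcases hw with ha | hm
  · choose y hqy hyw hy using fun i => exists_abs_lt_half_sub_eq_int hq0 hodd (ha i)
    exact ⟨y, Or.inl hqy, Or.inl hyw, mem_interior_splitPolytope_typeD hy⟩
  · obtain ⟨c, hc⟩ := hodd
    have hshift : ∀ i, ∃ a : ℤ, (q : ℝ) * (w i + 1 / 2) = a := by
      intro i
      obtain ⟨m, hm⟩ := hm i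
      refine ⟨m + c + 1, ?_⟩
      simp only [Pi.smul_apply, smul_eq_mul] at hm
      rw [mul_add, hm, hc]
      push_cast
      ring
    choose y hqy hyw hy using fun i => exists_abs_lt_half_sub_eq_int hq0 ⟨c, hc⟩ (hshift i)
    refine ⟨y, Or.inl hqy, Or.inr fun i => ?_, mem_interior_splitPolytope_typeD hy⟩
    obtain ⟨k, hk⟩ := hyw i
    exact ⟨k, by simp only [Pi.sub_apply]; linarith⟩

/-- Every lattice polytope cut out by `D_n` is diagonally split for every odd `q ≥ 3`:
the interior of the diagonal splitting polytope of `D_n` contains a representative of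
every equivalence class in `(1/q)M / M`, where `M = ℤ^n + ℤ·(1/2,…,1/2)` is the dual of
the root lattice. -/
theorem typeD_diagonally_split (n : ℕ) (hn : 2 ≤ n) (q : ℤ) (hq : 3 ≤ q) (hodd : Odd q)
    (w : Fin n → ℝ) (hw : (q : ℝ) • w ∈ halfLattice n) :
    ∃ u : Fin n → ℝ, (q : ℝ) • u ∈ halfLattice n ∧ u - w ∈ halfLattice n ∧
      u ∈ interior (splitPolytope n (typeD n)) :=
  typeD_diagonally_split_general n q hq hodd w hw
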